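/- The correspondence f ↦ f^t is an isometric isomorphism from HL₀(B_X, Y) onto the space of weak*-to-weak* continuous linear operators from Y* into HL₀(B_X), where HL₀(B_X) carries the weak* topology induced by its predual G₀(B_X). -/

import Mathlib

open Metric Set Filter Topology

noncomputable section

universe u

def LipImage {X Y : Type*} [NormedAddCommGroup X] [NormedSpace ℂ X]
    [NormedAddCommGroup Y] [NormedSpace ℂ Y] (f : X → Y) : Set Y :=
  {v | ∃ x ∈ ball (0 : X) 1, ∃ y ∈ ball (0 : X) 1, x ≠ y ∧ v = ‖x - y‖⁻¹ • (f x - f y)}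

def MemHL {X Y : Type*} [NormedAddCommGroup X] [NormedSpace ℂ X]
    [NormedAddCommGroup Y] [NormedSpace ℂ Y] (f : X → Y) : Prop :=
  f 0 = 0 ∧ DifferentiableOn ℂ f (ball (0 : X) 1) ∧
    ∃ C : ℝ, ∀ x ∈ ball (0 : X) 1, ∀ y ∈ ball (0 : X) 1, ‖f x - f y‖ ≤ C * ‖x - y‖

def LipNorm {X Y : Type*} [NormedAddCommGroup X] [NormedSpace ℂ X]
    [NormedAddCommGroup Y] [NormedSpace ℂ Y] (f : X → Y) : ℝ :=
  sSup ((fun p : X × X => ‖f p.1 - f p.2‖ / ‖p.1 - p.2‖) ''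
    {p : X × X | p.1 ∈ ball (0 : X) 1 ∧ p.2 ∈ ball (0 : X) 1 ∧ p.1 ≠ p.2})

/-- An element of the dual, regarded in the weak* dual. -/
def toWD {E : Type*} [NormedAddCommGroup E] [NormedSpace ℂ E] (u : E →L[ℂ] ℂ) :
    WeakDual ℂ E := u

/-!
For `φ ∈ Y*` the functional `f^t φ = Λ_X (φ ∘ f)` takes the value `φ (f x)` at `δX x`, and these
points span a dense subspace of `G`. The `v ∈ G` at which `φ ↦ f^t φ v` is evaluation at a point
of `Y` form a closed subspace (the canonical image of `Y` in `Y**` is closed, `Y` being complete),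
so `f^t` is pointwise evaluation on all of `G`: it is the adjoint of the linearisation of `f`,
hence weak*-continuous. Conversely, a weak*-continuous functional on `Y*` is evaluation at a point
of `Y`, so a weak*-continuous `u` is pointwise evaluation at `S v ∈ Y`; `S` is linear, and bounded
because `u` has closed graph, and `u = (S ∘ δX)^t`. The isometry is Hahn–Banach: a norming
functional `φ` of `f x - f y` gives `‖f x - f y‖ = ‖φ (f x) - φ (f y)‖`.
-/

section Lipschitz

variable {X Y Z : Type*} [NormedAddCommGroup X] [NormedSpace ℂ X]
  [NormedAddCommGroup Y] [NormedSpace ℂ Y] [NormedAddCommGroup Z] [NormedSpace ℂ Z]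

def LipschitzOnBall (f : X → Y) : Prop :=
  ∃ C : ℝ, ∀ x ∈ ball (0 : X) 1, ∀ y ∈ ball (0 : X) 1, ‖f x - f y‖ ≤ C * ‖x - y‖

theorem MemHL.lipschitzOnBall {f : X → Y} (hf : MemHL f) : LipschitzOnBall f :=
  hf.2.2

theorem lipNorm_nonneg (f : X → Y) : 0 ≤ LipNorm f :=
  Real.sSup_nonneg <| by rintro _ ⟨p, -, rfl⟩; positivity

theorem lipNorm_le {f : X → Y} {C : ℝ} (hC : 0 ≤ C)
    (h : ∀ x ∈ ball (0 : X) 1, ∀ y ∈ ball (0 : X) 1, ‖f x - f y‖ ≤ C * ‖x - y‖) :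
    LipNorm f ≤ C := by
  refine Real.sSup_le ?_ hC
  rintro _ ⟨⟨x, y⟩, ⟨hx, hy, hxy⟩, rfl⟩
  rw [div_le_iff₀ (norm_pos_iff.2 (sub_ne_zero.2 hxy))]
  exact h x hx y hy

theorem LipschitzOnBall.norm_sub_le_lipNorm {f : X → Y} (hf : LipschitzOnBall f) {x y : X}
    (hx : x ∈ ball (0 : X) 1) (hy : y ∈ ball (0 : X) 1) :
    ‖f x - f y‖ ≤ LipNorm f * ‖x - y‖ := by
  obtain rfl | hxy := eq_or_ne x y
  · simp
  obtain ⟨C, hC⟩ := hf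
  rw [← div_le_iff₀ (norm_pos_iff.2 (sub_ne_zero.2 hxy))]
  refine le_csSup ⟨max C 0, ?_⟩ ⟨(x, y), ⟨hx, hy, hxy⟩, rfl⟩
  rintro _ ⟨⟨a, b⟩, ⟨ha, hb, hab⟩, rfl⟩
  rw [div_le_iff₀ (norm_pos_iff.2 (sub_ne_zero.2 hab))]
  exact (hC a ha b hb).trans (by gcongr; exact le_max_left C 0)

theorem LipschitzOnBall.norm_clm_comp_sub_le {f : X → Y} (hf : LipschitzOnBall f)
    (L : Y →L[ℂ] Z) {x y : X} (hx : x ∈ ball (0 : X) 1) (hy : y ∈ ball (0 : X) 1) :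
    ‖L (f x) - L (f y)‖ ≤ ‖L‖ * LipNorm f * ‖x - y‖ :=
  calc ‖L (f x) - L (f y)‖ = ‖L (f x - f y)‖ := by rw [map_sub]
    _ ≤ ‖L‖ * ‖f x - f y‖ := L.le_opNorm _
    _ ≤ ‖L‖ * (LipNorm f * ‖x - y‖) := by gcongr; exact hf.norm_sub_le_lipNorm hx hy
    _ = ‖L‖ * LipNorm f * ‖x - y‖ := (mul_assoc _ _ _).symm

theorem LipschitzOnBall.clm_comp {f : X → Y} (hf : LipschitzOnBall f) (L : Y →L[ℂ] Z) :
    LipschitzOnBall fun x => L (f x) :=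
  ⟨_, fun _ hx _ hy => hf.norm_clm_comp_sub_le L hx hy⟩

theorem LipschitzOnBall.lipNorm_clm_comp_le {f : X → Y} (hf : LipschitzOnBall f)
    (L : Y →L[ℂ] Z) : LipNorm (fun x => L (f x)) ≤ ‖L‖ * LipNorm f :=
  lipNorm_le (mul_nonneg (norm_nonneg L) (lipNorm_nonneg f))
    fun _ hx _ hy => hf.norm_clm_comp_sub_le L hx hy

theorem MemHL.clm_comp {f : X → Y} (hf : MemHL f) (L : Y →L[ℂ] Z) :
    MemHL fun x => L (f x) :=
  ⟨by simp [hf.1], L.differentiable.comp_differentiableOn hf.2.1,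
    hf.lipschitzOnBall.clm_comp L⟩

theorem LipschitzOnBall.sSup_lipNorm_dual_comp {f : X → Y} (hf : LipschitzOnBall f) :
    sSup {r : ℝ | ∃ φ : Y →L[ℂ] ℂ, ‖φ‖ ≤ 1 ∧ r = LipNorm (fun x => φ (f x))} = LipNorm f := by
  set S := {r : ℝ | ∃ φ : Y →L[ℂ] ℂ, ‖φ‖ ≤ 1 ∧ r = LipNorm (fun x => φ (f x))}
  have hS : ∀ r ∈ S, r ≤ LipNorm f := by
    rintro _ ⟨φ, hφ, rfl⟩
    exact (hf.lipNorm_clm_comp_le φ).trans (mul_le_of_le_one_left (lipNorm_nonneg f) hφ)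
  refine le_antisymm (Real.sSup_le hS (lipNorm_nonneg f)) (lipNorm_le ?_ fun x hx y hy => ?_)
  · exact Real.sSup_nonneg (by rintro _ ⟨φ, -, rfl⟩; exact lipNorm_nonneg _)
  obtain ⟨φ, hφ, hφf⟩ := exists_dual_vector'' ℂ (f x - f y)
  calc ‖f x - f y‖ = ‖φ (f x) - φ (f y)‖ := by rw [← map_sub, hφf]; simp
    _ ≤ LipNorm (fun x => φ (f x)) * ‖x - y‖ := (hf.clm_comp φ).norm_sub_le_lipNorm hx hy
    _ ≤ sSup S * ‖x - y‖ := by gcongr; exact le_csSup ⟨_, hS⟩ ⟨φ, hφ, rfl⟩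

end Lipschitz

section WeakStar

variable {Y G : Type*} [NormedAddCommGroup Y] [NormedSpace ℂ Y]
  [NormedAddCommGroup G] [NormedSpace ℂ G]

theorem exists_eq_apply_of_continuous_weakDual (l : (Y →L[ℂ] ℂ) →ₗ[ℂ] ℂ)
    (hl : Continuous fun φ : WeakDual ℂ Y => l φ) : ∃ y : Y, ∀ φ : Y →L[ℂ] ℂ, l φ = φ y := by
  obtain ⟨y, hy⟩ := LinearMap.dualEmbedding_surjective (topDualPairing ℂ Y) ⟨l, hl⟩
  exact ⟨y, fun φ => (congrArg (fun L : StrongDual ℂ (WeakDual ℂ Y) => L φ) hy).symm⟩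

theorem continuous_toWD_of_forall_exists_eval (u : (Y →L[ℂ] ℂ) → (G →L[ℂ] ℂ))
    (hu : ∀ v : G, ∃ y : Y, ∀ φ, u φ v = φ y) :
    Continuous fun φ : WeakDual ℂ Y => toWD (u φ) :=
  WeakDual.continuous_of_continuous_eval fun v => by
    obtain ⟨y, hy⟩ := hu v
    exact (WeakDual.eval_continuous y).congr fun φ => (hy φ).symm

theorem forall_exists_eval_of_continuous_toWD (u : (Y →L[ℂ] ℂ) →ₗ[ℂ] (G →L[ℂ] ℂ))
    (hu : Continuous fun φ : WeakDual ℂ Y => toWD (u φ)) (v : G) :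
    ∃ y : Y, ∀ φ, u φ v = φ y :=
  exists_eq_apply_of_continuous_weakDual ((ContinuousLinearMap.apply ℂ ℂ v).toLinearMap ∘ₗ u)
    ((WeakDual.eval_continuous v).comp hu)

theorem continuous_of_forall_exists_eval (u : (Y →L[ℂ] ℂ) →ₗ[ℂ] (G →L[ℂ] ℂ))
    (hu : ∀ v : G, ∃ y : Y, ∀ φ, u φ v = φ y) : Continuous u :=
  u.continuous_of_seq_closed_graph fun φs φ ψ hφ hψ => ContinuousLinearMap.ext fun v => by
    obtain ⟨y, hy⟩ := hu v
    have h₁ : Tendsto (fun n => u (φs n) v) atTop (𝓝 (ψ v)) :=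
      ((ContinuousLinearMap.apply ℂ ℂ v).continuous.tendsto ψ).comp hψ
    have h₂ : Tendsto (fun n => u (φs n) v) atTop (𝓝 (u φ v)) := by
      simpa only [hy, Function.comp_def, ContinuousLinearMap.apply_apply] using
        ((ContinuousLinearMap.apply ℂ ℂ y).continuous.tendsto φ).comp hφ
    exact tendsto_nhds_unique h₁ h₂

theorem exists_preadjoint_of_forall_exists_eval (u : (Y →L[ℂ] ℂ) →ₗ[ℂ] (G →L[ℂ] ℂ))
    (hu : ∀ v : G, ∃ y : Y, ∀ φ, u φ v = φ y) :
    ∃ S : G →L[ℂ] Y, ∀ (v : G) (φ : Y →L[ℂ] ℂ), u φ v = φ (S v) := by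
  choose S hS using hu
  let uc : (Y →L[ℂ] ℂ) →L[ℂ] (G →L[ℂ] ℂ) :=
    ⟨u, continuous_of_forall_exists_eval u fun v => ⟨S v, hS v⟩⟩
  let S' : G →ₗ[ℂ] Y :=
    { toFun := S
      map_add' := fun v w => (SeparatingDual.eq_iff_forall_dual_eq (R := ℂ)).2 fun φ => by
        simp only [map_add, ← hS]
      map_smul' := fun c v => (SeparatingDual.eq_iff_forall_dual_eq (R := ℂ)).2 fun φ => by
        simp only [map_smul, ← hS, RingHom.id_apply] }
  refine ⟨S'.mkContinuous ‖uc‖ fun v => ?_, hS⟩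
  refine NormedSpace.norm_le_dual_bound ℂ _ (by positivity) fun φ => ?_
  calc ‖φ (S v)‖ = ‖uc φ v‖ := by rw [← hS]; rfl
    _ ≤ ‖uc φ‖ * ‖v‖ := (uc φ).le_opNorm v
    _ ≤ ‖uc‖ * ‖φ‖ * ‖v‖ := by gcongr; exact uc.le_opNorm φ
    _ = ‖uc‖ * ‖v‖ * ‖φ‖ := by ring

theorem forall_exists_eval_of_dense [CompleteSpace Y] (F : (Y →L[ℂ] ℂ) →L[ℂ] (G →L[ℂ] ℂ))
    {s : Set G} (hs : Dense (Submodule.span ℂ s : Set G))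
    (hF : ∀ v ∈ s, ∃ y : Y, ∀ φ, F φ v = φ y) (v : G) : ∃ y : Y, ∀ φ, F φ v = φ y := by
  let J := NormedSpace.inclusionInDoubleDualLi ℂ (E := Y)
  have hJ : IsClosed (range J) := J.isometry.isUniformInducing.isComplete_range.isClosed
  let M := (LinearMap.range J.toLinearMap).comap F.flip.toLinearMap
  have hM : IsClosed (M : Set G) := hJ.preimage F.flip.continuous
  have hsM : s ⊆ M := fun v hv => by
    obtain ⟨y, hy⟩ := hF v hv
    exact ⟨y, ContinuousLinearMap.ext fun φ => (hy φ).symm⟩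
  obtain ⟨y, hy⟩ : v ∈ M := hM.closure_subset_iff.2 (Submodule.span_le.2 hsM) (hs v)
  exact ⟨y, fun φ => (ContinuousLinearMap.ext_iff.1 hy φ).symm⟩

end WeakStar

section Linearization

variable {X Y G : Type*} [NormedAddCommGroup X] [NormedSpace ℂ X]
  [NormedAddCommGroup Y] [NormedSpace ℂ Y] [NormedAddCommGroup G] [NormedSpace ℂ G]
  {δX : X → G} {linC : (X → ℂ) → (G →L[ℂ] ℂ)}

theorem eq_linC_of_apply_delta
    (hlinC : ∀ g : X → ℂ, MemHL g → ∀ x ∈ ball (0 : X) 1, linC g (δX x) = g x)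
    (hdense : Dense (Submodule.span ℂ (δX '' ball (0 : X) 1) : Set G))
    {g : X → ℂ} (hg : MemHL g) {F : G →L[ℂ] ℂ} (hF : ∀ x ∈ ball (0 : X) 1, F (δX x) = g x) :
    F = linC g :=
  ContinuousLinearMap.ext_on hdense <| by
    rintro _ ⟨x, hx, rfl⟩
    rw [hF x hx, hlinC g hg x hx]

theorem eqOn_of_linC_comp_eq
    (hlinC : ∀ g : X → ℂ, MemHL g → ∀ x ∈ ball (0 : X) 1, linC g (δX x) = g x)
    {f g : X → Y} (hf : MemHL f) (hg : MemHL g)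
    (h : ∀ φ : Y →L[ℂ] ℂ, linC (fun x => φ (f x)) = linC (fun x => φ (g x))) :
    EqOn f g (ball (0 : X) 1) := fun x hx =>
  SeparatingDual.eq_iff_forall_dual_eq.2 fun φ => by
    rw [← hlinC _ (hf.clm_comp φ) x hx, ← hlinC _ (hg.clm_comp φ) x hx, h φ]

theorem exists_clm_eq_linC_comp
    (hlinC : ∀ g : X → ℂ, MemHL g → ∀ x ∈ ball (0 : X) 1, linC g (δX x) = g x)
    (hdense : Dense (Submodule.span ℂ (δX '' ball (0 : X) 1) : Set G))
    (hlinCnorm : ∀ g : X → ℂ, MemHL g → ‖linC g‖ = LipNorm g) {f : X → Y} (hf : MemHL f) :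
    ∃ F : (Y →L[ℂ] ℂ) →L[ℂ] (G →L[ℂ] ℂ), ∀ φ, F φ = linC (fun x => φ (f x)) := by
  have happly : ∀ φ : Y →L[ℂ] ℂ, ∀ x ∈ ball (0 : X) 1, linC (fun x => φ (f x)) (δX x) = φ (f x) :=
    fun φ => hlinC _ (hf.clm_comp φ)
  let F : (Y →L[ℂ] ℂ) →ₗ[ℂ] (G →L[ℂ] ℂ) :=
    { toFun := fun φ => linC (fun x => φ (f x))
      map_add' := fun φ ψ => .symm <| eq_linC_of_apply_delta hlinC hdense (hf.clm_comp _)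
        fun x hx => by simp [happly φ x hx, happly ψ x hx]
      map_smul' := fun c φ => .symm <| eq_linC_of_apply_delta hlinC hdense (hf.clm_comp _)
        fun x hx => by simp [happly φ x hx] }
  refine ⟨F.mkContinuous (LipNorm f) fun φ => ?_, fun φ => rfl⟩
  calc ‖linC (fun x => φ (f x))‖ = LipNorm (fun x => φ (f x)) := hlinCnorm _ (hf.clm_comp φ)
    _ ≤ ‖φ‖ * LipNorm f := hf.lipschitzOnBall.lipNorm_clm_comp_le φ
    _ = LipNorm f * ‖φ‖ := mul_comm _ _

theorem exists_linC_comp_apply_eq [CompleteSpace Y]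
    (hlinC : ∀ g : X → ℂ, MemHL g → ∀ x ∈ ball (0 : X) 1, linC g (δX x) = g x)
    (hdense : Dense (Submodule.span ℂ (δX '' ball (0 : X) 1) : Set G))
    (hlinCnorm : ∀ g : X → ℂ, MemHL g → ‖linC g‖ = LipNorm g) {f : X → Y} (hf : MemHL f)
    (v : G) : ∃ y : Y, ∀ φ : Y →L[ℂ] ℂ, linC (fun x => φ (f x)) v = φ y := by
  obtain ⟨F, hF⟩ := exists_clm_eq_linC_comp hlinC hdense hlinCnorm hf
  simp only [← hF]
  refine forall_exists_eval_of_dense F hdense ?_ v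
  rintro _ ⟨x, hx, rfl⟩
  exact ⟨f x, fun φ => by rw [hF, hlinC _ (hf.clm_comp φ) x hx]⟩

end Linearization

theorem transpose_isometric_iso_weakstar_general {X Y G : Type*}
    [NormedAddCommGroup X] [NormedSpace ℂ X]
    [NormedAddCommGroup Y] [NormedSpace ℂ Y] [CompleteSpace Y]
    [NormedAddCommGroup G] [NormedSpace ℂ G]
    (δX : X → G) (hδ : MemHL δX)
    (hdense : Dense (Submodule.span ℂ (δX '' ball (0 : X) 1) : Set G))
    (linC : (X → ℂ) → (G →L[ℂ] ℂ))
    (hlinC : ∀ g : X → ℂ, MemHL g → ∀ x ∈ ball (0 : X) 1, linC g (δX x) = g x)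
    (hlinCnorm : ∀ g : X → ℂ, MemHL g → ‖linC g‖ = LipNorm g) :
    (∀ f : X → Y, MemHL f →
        Continuous fun φ : WeakDual ℂ Y => toWD (linC (fun x => φ (f x)))) ∧
    (∀ f : X → Y, MemHL f →
        sSup {r : ℝ | ∃ φ : Y →L[ℂ] ℂ, ‖φ‖ ≤ 1 ∧ r = ‖linC (fun x => φ (f x))‖}
          = LipNorm f) ∧
    (∀ f g : X → Y, MemHL f → MemHL g →
        (∀ φ : Y →L[ℂ] ℂ, linC (fun x => φ (f x)) = linC (fun x => φ (g x))) →
        EqOn f g (ball (0 : X) 1)) ∧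
    (∀ u : (Y →L[ℂ] ℂ) →ₗ[ℂ] (G →L[ℂ] ℂ),
        (Continuous fun φ : WeakDual ℂ Y => toWD (u (φ : Y →L[ℂ] ℂ))) →
        ∃ f : X → Y, MemHL f ∧ ∀ φ : Y →L[ℂ] ℂ, u φ = linC (fun x => φ (f x))) := by
  refine ⟨fun f hf => ?_, fun f hf => ?_, fun f g hf hg h => eqOn_of_linC_comp_eq hlinC hf hg h,
    fun u hu => ?_⟩
  · exact continuous_toWD_of_forall_exists_eval _
      (exists_linC_comp_apply_eq hlinC hdense hlinCnorm hf)
  · have hnorm : ∀ φ : Y →L[ℂ] ℂ, ‖linC (fun x => φ (f x))‖ = LipNorm (fun x => φ (f x)) :=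
      fun φ => hlinCnorm _ (hf.clm_comp φ)
    simp only [hnorm]
    exact hf.lipschitzOnBall.sSup_lipNorm_dual_comp
  · obtain ⟨S, hS⟩ := exists_preadjoint_of_forall_exists_eval u
      (forall_exists_eval_of_continuous_toWD u hu)
    exact ⟨fun x => S (δX x), hδ.clm_comp S, fun φ =>
      eq_linC_of_apply_delta hlinC hdense ((hδ.clm_comp S).clm_comp φ) fun x _ => hS (δX x) φ⟩

/-- f ↦ f^t is an isometric isomorphism from HL₀(B_X, Y) onto the space
of weak*-to-weak* continuous linear operators from Y* into HL₀(B_X).  Here HL₀(B_X)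
is identified, via the canonical isometric isomorphism Λ_X (g ↦ T_g, hypothesized by
linC together with its universal and isometry properties), with the dual of G₀(B_X),
which induces its weak* topology.  The statement asserts: every f^t is w*-w*
continuous; the map is isometric (the operator norm of f^t equals L(f)); it is
injective; and it is surjective onto all w*-w* continuous linear operators. -/
theorem transpose_isometric_iso_weakstar {X Y G : Type*}
    [NormedAddCommGroup X] [NormedSpace ℂ X] [CompleteSpace X]
    [NormedAddCommGroup Y] [NormedSpace ℂ Y] [CompleteSpace Y]
    [NormedAddCommGroup G] [NormedSpace ℂ G] [CompleteSpace G]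
    (δX : X → G) (hδ : MemHL δX)
    (hdense : Dense (Submodule.span ℂ (δX '' ball (0 : X) 1) : Set G))
    (linC : (X → ℂ) → (G →L[ℂ] ℂ))
    (hlinC : ∀ g : X → ℂ, MemHL g → ∀ x ∈ ball (0 : X) 1, linC g (δX x) = g x)
    (hlinCnorm : ∀ g : X → ℂ, MemHL g → ‖linC g‖ = LipNorm g) :
    (∀ f : X → Y, MemHL f →
        Continuous fun φ : WeakDual ℂ Y => toWD (linC (fun x => φ (f x)))) ∧
    (∀ f : X → Y, MemHL f →
        sSup {r : ℝ | ∃ φ : Y →L[ℂ] ℂ, ‖φ‖ ≤ 1 ∧ r = ‖linC (fun x => φ (f x))‖}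
          = LipNorm f) ∧
    (∀ f g : X → Y, MemHL f → MemHL g →
        (∀ φ : Y →L[ℂ] ℂ, linC (fun x => φ (f x)) = linC (fun x => φ (g x))) →
        EqOn f g (ball (0 : X) 1)) ∧
    (∀ u : (Y →L[ℂ] ℂ) →ₗ[ℂ] (G →L[ℂ] ℂ),
        (Continuous fun φ : WeakDual ℂ Y => toWD (u (φ : Y →L[ℂ] ℂ))) →
        ∃ f : X → Y, MemHL f ∧ ∀ φ : Y →L[ℂ] ℂ, u φ = linC (fun x => φ (f x))) :=
  transpose_isometric_iso_weakstar_general δX hδ hdense linC hlinC hlinCnorm
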